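/- arXiv:0909.4027 — 2 statements merged into one kernel-verified Lean document; each statement's English description precedes it below -/
import Mathlib

section
/- In an A-group G, for an element w and a nonzero integer n, wⁿ is cyclically reduced if and only if w is cyclically reduced. -/
namespace ArtinMedian

/-- A median group, presented via a meet-semilattice operation `∩` (with induced
order `x ⊂ y ↔ x ∩ y = x`) satisfying: (1) `1 ⊂ x`; (2) `x ⊂ y → y ⊂ z →
z⁻¹y ⊂ z⁻¹x`; (3) `x⁻¹(x ∩ y) ⊂ x⁻¹y`. -/
class MedianGroup (G : Type*) extends Group G where
  meet : G → G → G
  meet_comm : ∀ x y, meet x y = meet y x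
  meet_assoc : ∀ x y z, meet (meet x y) z = meet x (meet y z)
  meet_idem : ∀ x, meet x x = x
  one_meet : ∀ x, meet 1 x = 1
  inv_mul_antitone : ∀ x y z, meet x y = x → meet y z = y →
    meet (z⁻¹ * y) (z⁻¹ * x) = z⁻¹ * y
  meet_axiom : ∀ x y, meet (x⁻¹ * meet x y) (x⁻¹ * y) = x⁻¹ * meet x y

namespace MedianGroup

variable {G : Type*} [MedianGroup G]

/-- The order `x ⊂ y` of a median group. -/
def sub (x y : G) : Prop := meet x y = x

/-- `j` is the join (least upper bound) `x ∪ y`. -/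
def isJoin (x y j : G) : Prop :=
  sub x j ∧ sub y j ∧ ∀ c, sub x c → sub y c → sub j c

/-- The join `x ∪ y` exists (`x ∪ y ≠ ∞`). -/
def hasJoin (x y : G) : Prop := ∃ j, isJoin x y j

/-- Orthogonality: `x ⊥ y` iff `x ∩ y = 1` and `x ∪ y` exists. -/
def orth (x y : G) : Prop := meet x y = 1 ∧ hasJoin x y

/-- `G` is a `⊥`-group: `x ⊥ y` implies `x ∪ y = xy`. -/
def PerpGroup (G : Type*) [MedianGroup G] : Prop :=
  ∀ x y : G, orth x y → isJoin x y (x * y)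

/-- Axiom A₁: `x ∪ y` exists and `x⁻¹ ⊂ y⁻¹` imply `x ⊂ y`. -/
def A1 (G : Type*) [MedianGroup G] : Prop :=
  ∀ x y : G, hasJoin x y → sub x⁻¹ y⁻¹ → sub x y

/-- Axiom A₂: `x ∩ y = x⁻¹ ∩ z = y⁻¹ ∩ z = 1` imply `xz ∩ yz ⊂ z`. -/
def A2 (G : Type*) [MedianGroup G] : Prop :=
  ∀ x y z : G, meet x y = 1 → meet x⁻¹ z = 1 → meet y⁻¹ z = 1 →
    sub (meet (x * z) (y * z)) z

/-- Axiom A₄: if `x ∪ x⁻¹` exists then `x = 1`. -/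
def A4 (G : Type*) [MedianGroup G] : Prop :=
  ∀ x : G, hasJoin x x⁻¹ → x = 1

/-- An A-group: a `⊥`-group satisfying A₁, A₂ and A₄. -/
def AGroup (G : Type*) [MedianGroup G] : Prop :=
  PerpGroup G ∧ A1 G ∧ A2 G ∧ A4 G

/-- The median of a median group: `Y(x,y,z) = x·((x⁻¹y) ∩ (x⁻¹z))`. -/
def medY (x y z : G) : G := x * meet (x⁻¹ * y) (x⁻¹ * z)

/-- The interval (cell) `[x,y]` of a median group. -/
def interval (x y : G) : Set G := {z | sub (x⁻¹ * z) (x⁻¹ * y)}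

/-- Convexity of a subset of a median group. -/
def IsConvex (C : Set G) : Prop :=
  ∀ x y z : G, x ∈ C → y ∈ C → medY x z y ∈ C

-- ===================== toolkit part 1 =====================
section Toolkit
variable {G : Type*} [MedianGroup G]

lemma sub_refl (x : G) : sub x x := meet_idem x

lemma sub_trans {x y z : G} (h1 : sub x y) (h2 : sub y z) : sub x z := by
  unfold sub at *
  calc meet x z = meet (meet x y) z := by rw [h1]
    _ = meet x (meet y z) := meet_assoc x y z
    _ = meet x y := by rw [h2]
    _ = x := h1

lemma sub_antisymm {x y : G} (h1 : sub x y) (h2 : sub y x) : x = y := by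
  unfold sub at *
  rw [← h1, meet_comm, h2]

lemma one_sub (x : G) : sub 1 x := one_meet x

lemma sub_one {x : G} (h : sub x 1) : x = 1 := by
  unfold sub at h
  rw [meet_comm, one_meet] at h
  exact h.symm

lemma meet_sub_left (x y : G) : sub (meet x y) x := by
  unfold sub
  calc meet (meet x y) x = meet (meet y x) x := by rw [meet_comm x y]
    _ = meet y (meet x x) := meet_assoc y x x
    _ = meet y x := by rw [meet_idem]
    _ = meet x y := meet_comm y x

lemma meet_sub_right (x y : G) : sub (meet x y) y := by
  rw [meet_comm]; exact meet_sub_left y x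

lemma sub_meet {d x y : G} (h1 : sub d x) (h2 : sub d y) : sub d (meet x y) := by
  unfold sub at *
  calc meet d (meet x y) = meet (meet d x) y := (meet_assoc d x y).symm
    _ = meet d y := by rw [h1]
    _ = d := h2

/-- meets vanish downward: if `a ⊂ a'`, `b ⊂ b'` and `a' ∩ b' = 1` then `a ∩ b = 1`. -/
lemma meet_eq_one_mono {a a' b b' : G} (ha : sub a a') (hb : sub b b')
    (h : meet a' b' = 1) : meet a b = 1 := by
  have h1 : sub (meet a b) a' := sub_trans (meet_sub_left a b) ha
  have h2 : sub (meet a b) b' := sub_trans (meet_sub_right a b) hb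
  have := sub_meet h1 h2
  rw [h] at this
  exact sub_one this

/-- L1: `x ⊂ z ↔ z⁻¹x ⊂ z⁻¹` (forward direction; the reverse is the same lemma at `z⁻¹`). -/
lemma sub_inv_mul {x z : G} (h : sub x z) : sub (z⁻¹ * x) z⁻¹ := by
  have := inv_mul_antitone 1 x z (one_meet x) h
  unfold sub
  rwa [mul_one] at this

lemma sub_of_inv_mul {x z : G} (h : sub (z⁻¹ * x) z⁻¹) : sub x z := by
  have := sub_inv_mul h
  simpa using this

/-- IMA convenience: `x ⊂ y ⊂ z` implies `z⁻¹y ⊂ z⁻¹x`. -/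
lemma ima {x y z : G} (h1 : sub x y) (h2 : sub y z) : sub (z⁻¹ * y) (z⁻¹ * x) :=
  inv_mul_antitone x y z h1 h2

/-- D1: `x ∩ y = 1` implies `x⁻¹ ⊂ x⁻¹y`. -/
lemma d1 {x y : G} (h : meet x y = 1) : sub x⁻¹ (x⁻¹ * y) := by
  have := meet_axiom x y
  rw [h, mul_one] at this
  exact this

/-- V: `x ⊂ z` implies `x⁻¹ ∩ x⁻¹z = 1`. -/
lemma vlem {x z : G} (h : sub x z) : meet x⁻¹ (x⁻¹ * z) = 1 := by
  set d := meet x⁻¹ (x⁻¹ * z) with hd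
  have hd1 : sub d x⁻¹ := meet_sub_left _ _
  have hd2 : sub d (x⁻¹ * z) := meet_sub_right _ _
  -- x * d ⊂ x
  have hxd : sub (x * d) x := by
    have := sub_inv_mul hd1
    simpa using this
  -- chain x*d ⊂ x ⊂ z gives z⁻¹x ⊂ z⁻¹(x*d)
  have h1 : sub (z⁻¹ * x) (z⁻¹ * (x * d)) := ima hxd h
  -- d ⊂ x⁻¹z gives (x⁻¹z)⁻¹ d ⊂ (x⁻¹z)⁻¹, i.e. z⁻¹x*d ⊂ z⁻¹x
  have h2 : sub (z⁻¹ * (x * d)) (z⁻¹ * x) := by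
    have := sub_inv_mul hd2
    have e1 : (x⁻¹ * z)⁻¹ * d = z⁻¹ * (x * d) := by group
    have e2 : (x⁻¹ * z)⁻¹ = z⁻¹ * x := by group
    rwa [e1, e2] at this
  have := sub_antisymm h1 h2
  have : z⁻¹ * x = z⁻¹ * (x * d) := this
  have : x = x * d := by
    exact mul_left_cancel this
  have : x * 1 = x * d := by simpa using this
  exact (mul_left_cancel this).symm

/-- order iff meet-with-inverse-vanishing: `x ⊂ z ↔ x⁻¹ ∩ x⁻¹z = 1`. -/
lemma sub_of_meet_inv {x z : G} (h : meet x⁻¹ (x⁻¹ * z) = 1) : sub x z := by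
  have := d1 h
  simpa using this

end Toolkit
-- ===================== toolkit part 2 =====================
section Toolkit2
variable {G : Type*} [MedianGroup G]

/-- Sandwich: `g ⊂ m ⊂ a` implies `g⁻¹m ⊂ g⁻¹a`. -/
lemma sandwich {g m a : G} (h1 : sub g m) (h2 : sub m a) : sub (g⁻¹ * m) (g⁻¹ * a) := by
  have hm : meet (m⁻¹ * g) (m⁻¹ * a) = 1 :=
    meet_eq_one_mono (sub_inv_mul h1) (sub_refl _) (vlem h2)
  have := d1 hm
  have e2 : (m⁻¹ * g)⁻¹ * (m⁻¹ * a) = g⁻¹ * a := by group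
  have e1 : (m⁻¹ * g)⁻¹ = g⁻¹ * m := by group
  rwa [e2, e1] at this

/-- Localization of the meet at a common lower bound. -/
lemma locMeet {g x y : G} (hx : sub g x) (hy : sub g y) :
    meet (g⁻¹ * x) (g⁻¹ * y) = g⁻¹ * meet x y := by
  set m := meet x y with hm
  set n := meet (g⁻¹ * x) (g⁻¹ * y) with hn
  have hgm : sub g m := sub_meet hx hy
  have hdir : sub (g⁻¹ * m) n :=
    sub_meet (sandwich hgm (meet_sub_left x y)) (sandwich hgm (meet_sub_right x y))
  -- reverse
  have hgn : sub g (g * n) := by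
    have h0 : meet g⁻¹ n = 1 :=
      meet_eq_one_mono (sub_refl _) (meet_sub_left _ _) (vlem hx)
    have := d1 h0
    simpa using this
  have hgnx : sub (g * n) x := by
    have t1 : sub ((g⁻¹ * x)⁻¹ * n) (g⁻¹ * x)⁻¹ := sub_inv_mul (meet_sub_left _ _)
    have t2 : sub (x⁻¹ * g) x⁻¹ := sub_inv_mul hx
    have e1 : (g⁻¹ * x)⁻¹ * n = x⁻¹ * (g * n) := by group
    have e2 : (g⁻¹ * x)⁻¹ = x⁻¹ * g := by group
    rw [e1, e2] at t1
    exact sub_of_inv_mul (sub_trans t1 t2)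
  have hgny : sub (g * n) y := by
    have t1 : sub ((g⁻¹ * y)⁻¹ * n) (g⁻¹ * y)⁻¹ := sub_inv_mul (meet_sub_right _ _)
    have t2 : sub (y⁻¹ * g) y⁻¹ := sub_inv_mul hy
    have e1 : (g⁻¹ * y)⁻¹ * n = y⁻¹ * (g * n) := by group
    have e2 : (g⁻¹ * y)⁻¹ = y⁻¹ * g := by group
    rw [e1, e2] at t1
    exact sub_of_inv_mul (sub_trans t1 t2)
  have hrev : sub n (g⁻¹ * m) := by
    have := sandwich hgn (sub_meet hgnx hgny)
    simpa using this
  exact sub_antisymm hrev hdir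

/-- Explicit join of two elements below a common upper bound. -/
lemma isJoin_ujoin {x y z : G} (hx : sub x z) (hy : sub y z) :
    isJoin x y (z * meet (z⁻¹ * x) (z⁻¹ * y)) := by
  set n := meet (z⁻¹ * x) (z⁻¹ * y) with hn
  have hnz : sub n z⁻¹ := sub_trans (meet_sub_left _ _) (sub_inv_mul hx)
  refine ⟨?_, ?_, ?_⟩
  · have := ima (meet_sub_left (z⁻¹ * x) (z⁻¹ * y)) (sub_inv_mul hx)
    simpa using this
  · have := ima (meet_sub_right (z⁻¹ * x) (z⁻¹ * y)) (sub_inv_mul hy)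
    simpa using this
  · intro c hxc hyc
    have hxd : sub x (meet c z) := sub_meet hxc hx
    have hyd : sub y (meet c z) := sub_meet hyc hy
    have hdz : sub (meet c z) z := meet_sub_right c z
    have t1 : sub (z⁻¹ * meet c z) (z⁻¹ * x) := ima hxd hdz
    have t2 : sub (z⁻¹ * meet c z) (z⁻¹ * y) := ima hyd hdz
    have t3 : sub (z⁻¹ * meet c z) n := sub_meet t1 t2
    have t4 := ima t3 hnz
    simp only [inv_inv] at t4
    -- t4 : sub (z * n) (z * (z⁻¹ * meet c z))
    have e : z * (z⁻¹ * meet c z) = meet c z := by group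
    rw [e] at t4
    exact sub_trans t4 (meet_sub_left c z)

lemma hasJoin_bounded {x y z : G} (hx : sub x z) (hy : sub y z) : hasJoin x y :=
  ⟨_, isJoin_ujoin hx hy⟩

lemma isJoin_swap {x y j : G} (h : isJoin x y j) : isJoin y x j :=
  ⟨h.2.1, h.1, fun c h1 h2 => h.2.2 c h2 h1⟩

lemma join_unique {x y j j' : G} (h : isJoin x y j) (h' : isJoin x y j') : j = j' :=
  sub_antisymm (h.2.2 j' h'.1 h'.2.1) (h'.2.2 j h.1 h.2.1)

/-- A₄-effective: an element bounded together with its inverse is trivial. -/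
lemma a4_bounded (hG : AGroup G) {x z : G} (h1 : sub x z) (h2 : sub x⁻¹ z) : x = 1 :=
  hG.2.2.2 x (hasJoin_bounded h1 h2)

/-- ⊥-effective: disjoint bounded elements join to their product. -/
lemma perp_isJoin (hG : AGroup G) {x y z : G} (h : meet x y = 1)
    (hx : sub x z) (hy : sub y z) : isJoin x y (x * y) :=
  hG.1 x y ⟨h, hasJoin_bounded hx hy⟩

/-- M-argument: if `P ∩ d = 1`, both bounded, and `d ⊂ P⁻¹`, then `d = 1`. -/
lemma marg (hG : AGroup G) {P d z : G} (h : meet P d = 1) (hP : sub P z)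
    (hd : sub d z) (hdP : sub d P⁻¹) : d = 1 := by
  have hj := perp_isJoin hG h hP hd
  have h2 : sub (P * d) P := by
    have := sub_inv_mul hdP
    simpa using this
  have := sub_antisymm hj.1 h2
  have : P * 1 = P * d := by simpa using this
  exact (mul_left_cancel this).symm

/-- Shift lemma: if `a ∩ b = 1` and `b ⊂ bc` then `a ∩ bc ⊂ c`. -/
lemma shift (hG : AGroup G) {a b c : G} (h : meet a b = 1) (hb : sub b (b * c)) :
    sub (meet a (b * c)) c := by
  set e := meet a (b * c) with he
  have heb : meet b e = 1 := by
    rw [meet_comm]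
    exact meet_eq_one_mono (meet_sub_left _ _) (sub_refl _) h
  have hj := perp_isJoin hG heb hb (meet_sub_right a (b * c))
  have hle : sub (b * e) (b * c) := hj.2.2 _ hb (meet_sub_right a (b * c))
  have := ima hj.1 hle
  have e1 : (b * c)⁻¹ * (b * e) = c⁻¹ * e := by group
  have e2 : (b * c)⁻¹ * b = c⁻¹ := by group
  rw [e1, e2] at this
  exact sub_of_inv_mul this

end Toolkit2
-- ===================== the key unconditional lemma =====================
section KeyLemma
variable {G : Type*} [MedianGroup G]

/-- The key lemma: `p = w ∩ w⁻¹` satisfies `p ⊂ wp` and `p ⊂ w⁻¹p`. -/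
lemma key_b1 (hG : AGroup G) (w : G) :
    sub (meet w w⁻¹) (w * meet w w⁻¹) ∧ sub (meet w w⁻¹) (w⁻¹ * meet w w⁻¹) := by
  set p := meet w w⁻¹ with hp
  set r := meet p (w * p) with hr
  set q := meet p (w⁻¹ * p) with hq
  have hpw : sub p w := meet_sub_left w w⁻¹
  have hpw' : sub p w⁻¹ := meet_sub_right w w⁻¹
  have hwp : sub (w * p) w := by
    have := sub_inv_mul hpw'; simpa using this
  have hw'p : sub (w⁻¹ * p) w⁻¹ := sub_inv_mul hpw
  have hrp : sub r p := meet_sub_left _ _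
  have hrwp : sub r (w * p) := meet_sub_right _ _
  have hqp : sub q p := meet_sub_left _ _
  have hqw'p : sub q (w⁻¹ * p) := meet_sub_right _ _
  -- α := r⁻¹p, β := r⁻¹(wp) are disjoint, bounded by r⁻¹w
  have hm1 : meet (r⁻¹ * p) (r⁻¹ * (w * p)) = 1 := by
    rw [locMeet hrp hrwp, ← hr]; simp
  have t1 : sub (r⁻¹ * p) (r⁻¹ * w) := sandwich hrp hpw
  have t2 : sub (r⁻¹ * (w * p)) (r⁻¹ * w) := sandwich hrwp hwp
  -- the join computed two ways
  have hj2 : isJoin (r⁻¹ * p) (r⁻¹ * (w * p)) ((r⁻¹ * (w * p)) * (r⁻¹ * p)) := by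
    refine isJoin_swap (perp_isJoin hG ?_ t2 t1)
    rw [meet_comm]; exact hm1
  have hj3 : isJoin (r⁻¹ * p) (r⁻¹ * (w * p))
      ((r⁻¹ * w) * meet ((r⁻¹ * w)⁻¹ * (r⁻¹ * p)) ((r⁻¹ * w)⁻¹ * (r⁻¹ * (w * p)))) :=
    isJoin_ujoin t1 t2
  have e1 : (r⁻¹ * w)⁻¹ * (r⁻¹ * p) = w⁻¹ * p := by group
  have e2 : (r⁻¹ * w)⁻¹ * (r⁻¹ * (w * p)) = p := by group
  rw [e1, e2] at hj3
  have hE : (r⁻¹ * (w * p)) * (r⁻¹ * p) = (r⁻¹ * w) * q := by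
    have := join_unique hj2 hj3
    rw [this, meet_comm, ← hq]
  -- hence q = p r⁻¹ p
  have hqval : q = p * r⁻¹ * p := by
    have h2 : (r⁻¹ * w) * q = (r⁻¹ * w) * (p * r⁻¹ * p) := by
      rw [← hE]; group
    exact mul_left_cancel h2
  -- α = r⁻¹ p and its inverse are both below p⁻¹
  have a1 : sub (r⁻¹ * p)⁻¹ p⁻¹ := by
    have := sub_inv_mul hrp
    have e : (r⁻¹ * p)⁻¹ = p⁻¹ * r := by group
    rwa [e]
  have a2 : sub (r⁻¹ * p) p⁻¹ := by
    have h3 := sub_inv_mul hqp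
    have e : p⁻¹ * q = r⁻¹ * p := by rw [hqval]; group
    rwa [e] at h3
  have hα : r⁻¹ * p = 1 := a4_bounded hG a2 a1
  have hpr : p = r := by
    have : r * (r⁻¹ * p) = r * 1 := by rw [hα]
    simpa [mul_assoc] using this
  constructor
  · rw [hpr] at hrwp ⊢
    exact hrwp
  · have hqp' : q = p := by rw [hqval, hpr]; group
    rw [hqp'] at hqw'p
    exact hqw'p

/-- `wp ∩ w⁻¹p = p`. -/
lemma meet_conj_parts (hG : AGroup G) (w : G) :
    meet (w * meet w w⁻¹) (w⁻¹ * meet w w⁻¹) = meet w w⁻¹ := by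
  set p := meet w w⁻¹ with hp
  have h1 := (key_b1 hG w).1
  have h2 := (key_b1 hG w).2
  refine sub_antisymm ?_ (sub_meet h1 h2)
  have hwp : sub (w * p) w := by
    have := sub_inv_mul (meet_sub_right w w⁻¹); simpa using this
  have hw'p : sub (w⁻¹ * p) w⁻¹ := sub_inv_mul (meet_sub_left w w⁻¹)
  exact sub_meet (sub_trans (meet_sub_left _ _) hwp)
    (sub_trans (meet_sub_right _ _) hw'p)

/-- The conjugate core `v = p⁻¹wp` is cyclically reduced. -/
lemma core_cr (hG : AGroup G) (w : G) :
    meet ((meet w w⁻¹)⁻¹ * (w * meet w w⁻¹)) ((meet w w⁻¹)⁻¹ * (w⁻¹ * meet w w⁻¹)) = 1 := by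
  rw [locMeet (key_b1 hG w).1 (key_b1 hG w).2, meet_conj_parts hG w]
  simp

end KeyLemma
-- ===================== Direction A: powers of a CR element =====================
section DirA
variable {G : Type*} [MedianGroup G]

/-- chain step : `u^k ⊂ u^(k+1)` provided `u ∩ (u⁻¹)^k = 1`. -/
lemma pow_chain_step {u : G} {k : ℕ} (h : meet u ((u⁻¹) ^ k) = 1) :
    sub (u ^ k) (u ^ (k + 1)) := by
  have h' : meet ((u⁻¹) ^ k) u = 1 := by rw [meet_comm]; exact h
  have := d1 h'
  rw [inv_pow] at this
  simp only [inv_inv] at this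
  rw [← pow_succ] at this
  exact this

/-- chains: `u^c ⊂ u^a` for `c ≤ a`. -/
lemma pow_chain {u : G} {a : ℕ} (h : ∀ j, 0 < j → j < a → meet u ((u⁻¹) ^ j) = 1) :
    ∀ c, 0 < c → c ≤ a → sub (u ^ c) (u ^ a) := by
  induction a with
  | zero => intro c hc hca; omega
  | succ a ih =>
      intro c hc hca
      rcases Nat.eq_or_lt_of_le hca with heq | hlt
      · rw [heq]; exact sub_refl _
      · have hca' : c ≤ a := by omega
        have ha : 0 < a := lt_of_lt_of_le hc hca'
        have step : sub (u ^ a) (u ^ (a + 1)) :=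
          pow_chain_step (h a ha (by omega))
        exact sub_trans (ih (fun j hj hja => h j hj (by omega)) c hc hca') step

/-- going right on the grid via the M-argument. -/
lemma griddown (hG : AGroup G) {u : G} {a b : ℕ}
    (hbb : meet (u ^ b) ((u⁻¹) ^ b) = 1) (hchain : sub (u ^ b) (u ^ a)) :
    meet (u ^ a) ((u⁻¹) ^ b) = 1 := by
  set d := meet (u ^ a) ((u⁻¹) ^ b) with hd
  have h1 : meet (u ^ b) d = 1 :=
    meet_eq_one_mono (sub_refl _) (meet_sub_right _ _) hbb
  have hdP : sub d (u ^ b)⁻¹ := by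
    rw [← inv_pow]; exact meet_sub_right _ _
  exact marg hG h1 hchain (meet_sub_left _ _) hdP

/-- mirrored version. -/
lemma griddown' (hG : AGroup G) {u : G} {a b : ℕ}
    (hbb : meet (u ^ a) ((u⁻¹) ^ a) = 1) (hchain : sub ((u⁻¹) ^ a) ((u⁻¹) ^ b)) :
    meet (u ^ a) ((u⁻¹) ^ b) = 1 := by
  set d := meet (u ^ a) ((u⁻¹) ^ b) with hd
  have h1 : meet ((u⁻¹) ^ a) d = 1 := by
    refine meet_eq_one_mono (sub_refl _) (meet_sub_left _ _) ?_
    rw [meet_comm]; exact hbb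
  have hdP : sub d ((u⁻¹) ^ a)⁻¹ := by
    rw [inv_pow, inv_inv]; exact meet_sub_left _ _
  have := marg hG h1 hchain (meet_sub_right _ _) hdP
  exact this

/-- diagonal step. -/
lemma diagstep (hG : AGroup G) {u : G} {k : ℕ}
    (hu : meet u u⁻¹ = 1)
    (h1 : meet (u ^ k) ((u⁻¹) ^ (k + 1)) = 1)
    (h2 : meet (u ^ (k + 1)) ((u⁻¹) ^ k) = 1)
    (c1 : sub (u ^ k) (u ^ (k + 1)))
    (c2 : sub ((u⁻¹) ^ k) ((u⁻¹) ^ (k + 1))) :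
    meet (u ^ (k + 1)) ((u⁻¹) ^ (k + 1)) = 1 := by
  set d := meet (u ^ (k + 1)) ((u⁻¹) ^ (k + 1)) with hd
  have hdu : sub d (u ^ (k + 1)) := meet_sub_left _ _
  have hdu' : sub d ((u⁻¹) ^ (k + 1)) := meet_sub_right _ _
  -- d ⊂ u
  have sdu : sub d u := by
    have m1 : meet (u ^ k) d = 1 := meet_eq_one_mono (sub_refl _) hdu' h1
    have hj := perp_isJoin hG m1 c1 hdu
    have hle : sub (u ^ k * d) (u ^ (k + 1)) := hj.2.2 _ c1 hdu
    have him := ima hj.1 hle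
    have e1 : (u ^ (k + 1))⁻¹ * (u ^ k * d) = u⁻¹ * d := by
      rw [pow_succ]; group
    have e2 : (u ^ (k + 1))⁻¹ * u ^ k = u⁻¹ := by
      rw [pow_succ]; group
    rw [e1, e2] at him
    exact sub_of_inv_mul him
  -- d ⊂ u⁻¹
  have sdu' : sub d u⁻¹ := by
    have m2 : meet ((u⁻¹) ^ k) d = 1 := by
      refine meet_eq_one_mono (sub_refl _) hdu ?_
      rw [meet_comm]; exact h2
    have hj := perp_isJoin hG m2 c2 hdu'
    have hle : sub ((u⁻¹) ^ k * d) ((u⁻¹) ^ (k + 1)) := hj.2.2 _ c2 hdu'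
    have him := ima hj.1 hle
    have e1 : ((u⁻¹) ^ (k + 1))⁻¹ * ((u⁻¹) ^ k * d) = (u⁻¹)⁻¹ * d := by
      rw [pow_succ]; group
    have e2 : ((u⁻¹) ^ (k + 1))⁻¹ * (u⁻¹) ^ k = (u⁻¹)⁻¹ := by
      rw [pow_succ]; group
    rw [e1, e2] at him
    exact sub_of_inv_mul him
  have : sub d (meet u u⁻¹) := sub_meet sdu sdu'
  rw [hu] at this
  exact sub_one this

/-- Direction A (grid form): all mixed meets of powers of a CR element vanish. -/
lemma dirA (hG : AGroup G) {u : G} (hu : meet u u⁻¹ = 1) :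
    ∀ n a b : ℕ, 0 < a → 0 < b → a + b ≤ n → meet (u ^ a) ((u⁻¹) ^ b) = 1 := by
  intro n
  induction n using Nat.strong_induction_on with
  | _ n IH =>
    intro a b ha hb hab
    -- all strictly smaller sums are available
    have IH' : ∀ a' b' : ℕ, 0 < a' → 0 < b' → a' + b' < n →
        meet (u ^ a') ((u⁻¹) ^ b') = 1 := by
      intro a' b' ha' hb' h
      exact IH (a' + b') h a' b' ha' hb' le_rfl
    have chainu : ∀ c j : ℕ, 0 < c → c ≤ j → j + 1 ≤ n → sub (u ^ c) (u ^ j) := by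
      intro c j hc hcj hjn
      refine pow_chain (fun i hi hij => ?_) c hc hcj
      have : 1 + i < n := by omega
      simpa using IH' 1 i one_pos hi this
    have chainu' : ∀ c j : ℕ, 0 < c → c ≤ j → j + 1 ≤ n → sub ((u⁻¹) ^ c) ((u⁻¹) ^ j) := by
      intro c j hc hcj hjn
      refine pow_chain (fun i hi hij => ?_) c hc hcj
      have h1 : i + 1 < n := by omega
      have := IH' i 1 hi one_pos h1
      rw [meet_comm] at this
      simpa using this
    rcases lt_trichotomy a b with hlt | heq | hgt
    · -- a < b : mirrored
      have hmeet : meet (u ^ a) ((u⁻¹) ^ a) = 1 := IH' a a ha ha (by omega)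
      exact griddown' hG hmeet (chainu' a b ha (le_of_lt hlt) (by omega))
    · -- diagonal
      subst heq
      rcases Nat.eq_or_lt_of_le ha with h1 | h1
      · -- a = 1
        have : a = 1 := h1.symm
        subst this
        simpa using hu
      · -- a ≥ 2
        obtain ⟨k, hk⟩ : ∃ k, a = k + 1 := ⟨a - 1, by omega⟩
        subst hk
        have hk0 : 0 < k := by omega
        have hd1 : meet (u ^ k) ((u⁻¹) ^ (k + 1)) = 1 := IH' k (k + 1) hk0 (by omega) (by omega)
        have hd2 : meet (u ^ (k + 1)) ((u⁻¹) ^ k) = 1 := IH' (k + 1) k (by omega) hk0 (by omega)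
        exact diagstep hG hu hd1 hd2
          (chainu k (k + 1) hk0 (by omega) (by omega))
          (chainu' k (k + 1) hk0 (by omega) (by omega))
    · -- a > b
      have hmeet : meet (u ^ b) ((u⁻¹) ^ b) = 1 := IH' b b hb hb (by omega)
      exact griddown hG hmeet (chainu b a hb (le_of_lt hgt) (by omega))

end DirA
-- ===================== Direction B: p lies below all powers =====================
section DirB
variable {G : Type*} [MedianGroup G]

private lemma conj_pow_helper (a b : G) (k : ℕ) :
    (a⁻¹ * (b * a)) ^ k = a⁻¹ * (b ^ k * a) := by
  induction k with
  | zero => simp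
  | succ k ih => rw [pow_succ, ih, pow_succ]; group

/-- `p = w ∩ w⁻¹` lies below every positive power of `w`. -/
lemma ple (hG : AGroup G) (w : G) : ∀ k : ℕ, 0 < k → sub (meet w w⁻¹) (w ^ k) := by
  set p := meet w w⁻¹ with hp
  set v := p⁻¹ * (w * p) with hv
  have hvinv : v⁻¹ = p⁻¹ * (w⁻¹ * p) := by rw [hv]; group
  have hcr : meet v v⁻¹ = 1 := by
    rw [hv, hvinv]; exact core_cr hG w
  have hcr' : meet v⁻¹ (v⁻¹)⁻¹ = 1 := by
    rw [inv_inv, meet_comm]; exact hcr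
  have ht : meet p⁻¹ v = 1 := by
    have := vlem (key_b1 hG w).1; rw [hv]; exact this
  have hs : meet p⁻¹ v⁻¹ = 1 := by
    have := vlem (key_b1 hG w).2; rw [hvinv]; exact this
  -- meets of v-powers
  have hvv : ∀ j : ℕ, 0 < j → meet v⁻¹ (v ^ j) = 1 := by
    intro j hj
    have := dirA hG hcr' (1 + j) 1 j one_pos hj le_rfl
    rw [pow_one, inv_inv] at this
    exact this
  -- chains for v⁻¹
  have chv' : ∀ j : ℕ, 0 < j → sub v⁻¹ ((v⁻¹) ^ j) := by
    intro j hj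
    have h := pow_chain (u := v⁻¹) (a := j) (fun i hi hij => by
      have := dirA hG hcr' (1 + i) 1 i one_pos hi le_rfl
      rw [pow_one] at this
      exact this) 1 one_pos hj
    rwa [pow_one] at h
  -- X n : p⁻¹ ∩ (v⁻¹)^n = 1
  have hX : ∀ n : ℕ, 0 < n → meet p⁻¹ ((v⁻¹) ^ n) = 1 := by
    intro n
    induction n with
    | zero => omega
    | succ n ih =>
        intro _
        rcases Nat.eq_zero_or_pos n with h0 | hpos
        · subst h0; rw [pow_one]; exact hs
        · have hb : sub v⁻¹ (v⁻¹ * (v⁻¹) ^ n) := by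
            have := chv' (n + 1) (by omega)
            rwa [pow_succ'] at this
          have hsh := shift hG hs hb
          have hle1 : sub (meet p⁻¹ (v⁻¹ * (v⁻¹) ^ n)) (meet p⁻¹ ((v⁻¹) ^ n)) :=
            sub_meet (meet_sub_left _ _) hsh
          rw [ih hpos] at hle1
          have := sub_one hle1
          rwa [← pow_succ'] at this
  -- Y n : v⁻¹ ∩ (v^n p⁻¹) = 1
  have hY : ∀ n : ℕ, meet v⁻¹ (v ^ n * p⁻¹) = 1 := by
    intro n
    rcases Nat.eq_zero_or_pos n with h0 | hpos
    · subst h0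
      rw [pow_zero, one_mul, meet_comm]
      exact hs
    · have hb : sub (v ^ n) (v ^ n * p⁻¹) := by
        have hm : meet (v ^ n)⁻¹ p⁻¹ = 1 := by
          rw [← inv_pow, meet_comm]
          exact hX n hpos
        have := d1 hm
        simpa using this
      have hsh := shift hG (hvv n hpos) hb
      have hle1 : sub (meet v⁻¹ (v ^ n * p⁻¹)) (meet v⁻¹ p⁻¹) :=
        sub_meet (meet_sub_left _ _) hsh
      rw [meet_comm p⁻¹ v⁻¹] at hs
      rw [hs] at hle1
      exact sub_one hle1
  -- Z n : p⁻¹ ∩ (v^n p⁻¹) = 1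
  have hZ : ∀ n : ℕ, 0 < n → meet p⁻¹ (v ^ n * p⁻¹) = 1 := by
    intro n
    induction n with
    | zero => omega
    | succ n ih =>
        intro _
        rcases Nat.eq_zero_or_pos n with h0 | hpos
        · subst h0
          have hpw : sub p w := meet_sub_left w w⁻¹
          have h1 := vlem hpw
          have e : v ^ 1 * p⁻¹ = p⁻¹ * w := by rw [pow_one, hv]; group
          rw [e]
          exact h1
        · have hb : sub v (v * (v ^ n * p⁻¹)) := by
            have := d1 (hY n)
            simpa using this
          have hsh := shift hG ht hb
          have hle1 : sub (meet p⁻¹ (v * (v ^ n * p⁻¹))) (meet p⁻¹ (v ^ n * p⁻¹)) :=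
            sub_meet (meet_sub_left _ _) hsh
          rw [ih hpos] at hle1
          have h2 := sub_one hle1
          have e : v * (v ^ n * p⁻¹) = v ^ (n + 1) * p⁻¹ := by
            rw [← mul_assoc, ← pow_succ']
          rwa [e] at h2
  -- conclude
  intro k hk
  have := d1 (hZ k hk)
  rw [inv_inv] at this
  have e : p * (v ^ k * p⁻¹) = w ^ k := by
    rw [hv, conj_pow_helper p w k]; group
  rwa [e] at this

end DirB
-- ===================== main theorem =====================
section Main
variable {G : Type*} [MedianGroup G]

lemma main_nat (hG : AGroup G) (w : G) {k : ℕ} (hk : 0 < k) :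
    meet (w ^ k) (w ^ k)⁻¹ = 1 ↔ meet w w⁻¹ = 1 := by
  constructor
  · intro h
    set p := meet w w⁻¹ with hp
    have h1 : sub p (w ^ k) := ple hG w k hk
    have h2 : sub p (w ^ k)⁻¹ := by
      have := ple hG w⁻¹ k hk
      rw [inv_inv, meet_comm, ← hp, inv_pow] at this
      exact this
    have := sub_meet h1 h2
    rw [h] at this
    exact sub_one this
  · intro h
    have := dirA hG h (k + k) k k hk hk le_rfl
    rwa [inv_pow] at this

end Main
/-- Corollary 4.4: in an A-group, for `w ∈ G` and a nonzero
integer `n`, `wⁿ` is cyclically reduced iff `w` is cyclically reduced. -/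
theorem cyclically_reduced_zpow_iff {G : Type*} [MedianGroup G]
    (hG : AGroup G) (w : G) (n : ℤ) (hn : n ≠ 0) :
    meet (w ^ n) (w ^ n)⁻¹ = 1 ↔ meet w w⁻¹ = 1 := by
  rcases n with m | m
  · -- nonnegative
    have hm : 0 < m := by
      rcases Nat.eq_zero_or_pos m with h0 | h; · exact absurd (by simp [h0]) hn
      exact h
    rw [Int.ofNat_eq_coe, zpow_natCast]
    exact main_nat hG w hm
  · -- negative
    rw [zpow_negSucc]
    have base := main_nat hG w (k := m + 1) (by omega)
    constructor
    · intro h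
      apply base.1
      rwa [inv_inv, meet_comm] at h
    · intro h
      rw [inv_inv, meet_comm]
      exact base.2 h
end MedianGroup
end ArtinMedian
end

section
/- In a right-angled Artin group G with its canonical median group structure, if x, y ∈ G and m ≥ 1 satisfy xᵐ = yᵐ, then x = y. Consequently Z_G(wᵐ) = Z_G(w) for all w ∈ G and m ≠ 0. -/
/-!
Elements of the group are represented by words in the letters `V × Bool`, and two words are
trace-equivalent when they differ by swaps of adjacent commuting letters. A trace is determined by
its projections to the pairs of non-commuting letters; since words have unique roots, so do traces.
Letting each letter act on reduced traces, by cancelling a leading inverse letter or else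
prepending itself, shows that reduced words representing the same element are trace-equivalent.
Every reduced word is trace-equivalent to `g c g⁻¹` with `c` cyclically reduced, and then
`g cᵐ g⁻¹` is reduced as well. So if `yᵐ = cᵐ` with `c` cyclically reduced and `y` is represented
by `g d g⁻¹`, the reduced words `cᵐ` and `g dᵐ g⁻¹` are trace-equivalent: cyclic reducedness of
`cᵐ` forces `g` to be empty, and `cᵐ ≡ dᵐ` gives `c ≡ d`. Unique roots identify the centralizers
of `w` and `wⁿ`, since `g` commutes with `wⁿ` iff `(g w g⁻¹)ⁿ = wⁿ`.
-/

namespace ArtinMedian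

/-- The commutator relations of a right-angled Artin group on vertex set `V`
with commuting pairs given by `E`. -/
def raagRels {V : Type*} (E : V → V → Prop) : Set (FreeGroup V) :=
  {r | ∃ s t : V, s ≠ t ∧ E s t ∧
    r = FreeGroup.of s * FreeGroup.of t * (FreeGroup.of s)⁻¹ * (FreeGroup.of t)⁻¹}

theorem centralizer_zpow_singleton {G : Type*} [Group G] [IsMulTorsionFree G] (w : G) {n : ℤ}
    (hn : n ≠ 0) : Subgroup.centralizer {w ^ n} = Subgroup.centralizer {w} := by
  ext g
  simp only [Subgroup.mem_centralizer_singleton_iff]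
  refine ⟨fun h => ?_, fun h => Commute.zpow_right h n⟩
  have hconj : (g * w * g⁻¹) ^ n = w ^ n := by rw [conj_zpow, h, mul_inv_cancel_right]
  exact mul_inv_eq_iff_eq_mul.1 (zpow_left_injective hn hconj)

namespace RAAG

open List Relation

variable {V : Type*} {E : V → V → Prop}

section Traces

def invLetter (a : V × Bool) : V × Bool := (a.1, !a.2)

@[simp] lemma invLetter_invLetter (a : V × Bool) : invLetter (invLetter a) = a := by
  simp [invLetter]

lemma invLetter_ne (a : V × Bool) : invLetter a ≠ a := by
  simp [invLetter, Prod.ext_iff]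

variable (E) in
/-- `E` need not be symmetric: the generators `s` and `t` commute as soon as `E s t` or `E t s`. -/
def Indep (a b : V × Bool) : Prop := a.1 ≠ b.1 ∧ (E a.1 b.1 ∨ E b.1 a.1)

lemma Indep.symm {a b : V × Bool} (h : Indep E a b) : Indep E b a :=
  ⟨h.1.symm, h.2.symm⟩

lemma not_indep_self (a : V × Bool) : ¬ Indep E a a := fun h => h.1 rfl

@[simp] lemma indep_invLetter_left {a b : V × Bool} :
    Indep E (invLetter a) b ↔ Indep E a b := Iff.rfl

@[simp] lemma indep_invLetter_right {a b : V × Bool} :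
    Indep E a (invLetter b) ↔ Indep E a b := Iff.rfl

variable (E) in
def SwapStep (u v : List (V × Bool)) : Prop :=
  ∃ A c d B, Indep E c d ∧ u = A ++ c :: d :: B ∧ v = A ++ d :: c :: B

variable (E) in
def TraceEq : List (V × Bool) → List (V × Bool) → Prop := ReflTransGen (SwapStep E)

namespace TraceEq

variable {u v w : List (V × Bool)}

@[refl] protected lemma refl (w : List (V × Bool)) : TraceEq E w w := ReflTransGen.refl

protected lemma trans (h₁ : TraceEq E u v) (h₂ : TraceEq E v w) : TraceEq E u w :=
  ReflTransGen.trans h₁ h₂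

protected lemma symm (h : TraceEq E u v) : TraceEq E v u := by
  induction h with
  | refl => rfl
  | tail _ hstep ih =>
    obtain ⟨A, c, d, B, hcd, rfl, rfl⟩ := hstep
    exact (ReflTransGen.single ⟨A, d, c, B, hcd.symm, rfl, rfl⟩).trans ih

lemma swap {c d : V × Bool} (hcd : Indep E c d) (w : List (V × Bool)) :
    TraceEq E (c :: d :: w) (d :: c :: w) :=
  ReflTransGen.single ⟨[], c, d, w, hcd, rfl, rfl⟩

lemma eq_of_swap_invariant {β : Type*} {f : List (V × Bool) → β}
    (hf : ∀ A c d B, Indep E c d → f (A ++ c :: d :: B) = f (A ++ d :: c :: B))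
    (h : TraceEq E u v) : f u = f v := by
  induction h with
  | refl => rfl
  | tail _ hstep ih =>
    obtain ⟨A, c, d, B, hcd, rfl, rfl⟩ := hstep
    exact ih.trans (hf A c d B hcd)

lemma map_of_swap {f : List (V × Bool) → List (V × Bool)}
    (hf : ∀ A c d B, Indep E c d → TraceEq E (f (A ++ c :: d :: B)) (f (A ++ d :: c :: B)))
    (h : TraceEq E u v) : TraceEq E (f u) (f v) :=
  ReflTransGen.lift' f (fun _ _ ⟨A, c, d, B, hcd, hu, hv⟩ => hu ▸ hv ▸ hf A c d B hcd) _ _ h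

lemma perm (h : TraceEq E u v) : u ~ v :=
  Multiset.coe_eq_coe.1 <| h.eq_of_swap_invariant (f := fun l => (l : Multiset (V × Bool)))
    fun A c d B _ => Multiset.coe_eq_coe.2 <| (Perm.swap d c B).append_left A

lemma length_eq (h : TraceEq E u v) : u.length = v.length := h.perm.length_eq

lemma mem_iff (h : TraceEq E u v) {a : V × Bool} : a ∈ u ↔ a ∈ v := h.perm.mem_iff

lemma append_left (p : List (V × Bool)) (h : TraceEq E u v) : TraceEq E (p ++ u) (p ++ v) :=
  h.map_of_swap (f := (p ++ ·)) fun A c d B hcd =>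
    ReflTransGen.single ⟨p ++ A, c, d, B, hcd, by simp, by simp⟩

lemma append_right (q : List (V × Bool)) (h : TraceEq E u v) : TraceEq E (u ++ q) (v ++ q) :=
  h.map_of_swap (f := (· ++ q)) fun A c d B hcd =>
    ReflTransGen.single ⟨A, c, d, B ++ q, hcd, by simp, by simp⟩

lemma append {u' v' : List (V × Bool)} (hu : TraceEq E u u') (hv : TraceEq E v v') :
    TraceEq E (u ++ v) (u' ++ v') :=
  (hu.append_right v).trans (hv.append_left u')

lemma cons (a : V × Bool) (h : TraceEq E u v) : TraceEq E (a :: u) (a :: v) :=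
  h.append_left [a]

lemma reverse (h : TraceEq E u v) : TraceEq E u.reverse v.reverse :=
  h.map_of_swap (f := List.reverse) fun A c d B hcd =>
    ReflTransGen.single ⟨B.reverse, d, c, A.reverse, hcd.symm, by simp, by simp⟩

end TraceEq

lemma traceEq_move_front {p : List (V × Bool)} {a : V × Bool} (hp : ∀ b ∈ p, Indep E b a)
    (q : List (V × Bool)) : TraceEq E (p ++ a :: q) (a :: (p ++ q)) := by
  induction p with
  | nil => rfl
  | cons b p ih =>
    exact (TraceEq.cons b (ih fun c hc => hp c (mem_cons_of_mem b hc))).trans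
      (TraceEq.swap (hp b mem_cons_self) _)

lemma traceEq_move_back {q : List (V × Bool)} {a : V × Bool} (hq : ∀ b ∈ q, Indep E b a)
    (p : List (V × Bool)) : TraceEq E (p ++ a :: q) (p ++ q ++ [a]) := by
  simpa using (traceEq_move_front (p := q.reverse) (by simpa using hq) p.reverse).reverse

end Traces

section Projections

variable [DecidableEq V]

def proj (a b : V × Bool) (w : List (V × Bool)) : List (V × Bool) :=
  w.filter fun c => c = a ∨ c = b

lemma proj_cons (a b c : V × Bool) (w : List (V × Bool)) :
    proj a b (c :: w) = if c = a ∨ c = b then c :: proj a b w else proj a b w := by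
  simp [proj, filter_cons]

lemma proj_append (a b : V × Bool) (u v : List (V × Bool)) :
    proj a b (u ++ v) = proj a b u ++ proj a b v :=
  filter_append u v

lemma proj_flatten_replicate (a b : V × Bool) (m : ℕ) (c : List (V × Bool)) :
    proj a b (replicate m c).flatten = (replicate m (proj a b c)).flatten := by
  simp [proj, filter_flatten, map_replicate]

variable {u v w : List (V × Bool)}

lemma TraceEq.proj_eq {a b : V × Bool} (hab : ¬ Indep E a b) (h : TraceEq E u v) :
    proj a b u = proj a b v := by
  refine h.eq_of_swap_invariant fun A c d B hcd => ?_
  simp only [proj_append, proj_cons]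
  by_cases hc : c = a ∨ c = b <;> by_cases hd : d = a ∨ d = b <;>
    simp only [hc, hd, if_true, if_false]
  -- two independent letters cannot both lie in the dependent pair `{a, b}`
  rcases hc with rfl | rfl <;> rcases hd with rfl | rfl
  exacts [(not_indep_self _ hcd).elim, (hab hcd).elim, (hab hcd.symm).elim,
    (not_indep_self _ hcd).elim]

variable (E) in
def SameProj (u v : List (V × Bool)) : Prop :=
  ∀ a b, ¬ Indep E a b → proj a b u = proj a b v

lemma TraceEq.sameProj (h : TraceEq E u v) : SameProj E u v :=
  fun _ _ hab => h.proj_eq hab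

lemma SameProj.trans (h₁ : SameProj E u v) (h₂ : SameProj E v w) : SameProj E u w :=
  fun a b hab => (h₁ a b hab).trans (h₂ a b hab)

lemma SameProj.of_cons {c : V × Bool} (h : SameProj E (c :: u) (c :: v)) : SameProj E u v := by
  intro a b hab
  have := h a b hab
  simp only [proj_cons] at this
  split_ifs at this
  exacts [(cons_inj_right c).1 this, this]

lemma SameProj.exists_eq_append_cons {a : V × Bool} (h : SameProj E (a :: u) w) :
    ∃ p q, w = p ++ a :: q ∧ ∀ b ∈ p, Indep E b a := by
  have haw : a ∈ w := by
    have := h a a (not_indep_self a)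
    simp only [proj_cons, or_self, if_true] at this
    exact (mem_filter.1 (this ▸ mem_cons_self : a ∈ proj a a w)).1
  obtain ⟨p, q, rfl, hap⟩ := eq_append_cons_of_mem haw
  refine ⟨p, q, rfl, fun b hb => ?_⟩
  by_contra hba
  -- the projection of `w` to `{a, b}` would start with a letter of `p`, but it starts with `a`
  have hproj := h a b fun hab => hba hab.symm
  obtain ⟨e, t, he⟩ : ∃ e t, proj a b p = e :: t :=
    exists_cons_of_ne_nil (ne_nil_of_mem (mem_filter.2 ⟨hb, by simp⟩))
  rw [proj_append, he, proj_cons, if_pos (Or.inl rfl)] at hproj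
  obtain ⟨rfl, -⟩ := cons_eq_cons.1 hproj
  exact hap (mem_filter.1 (he ▸ mem_cons_self : a ∈ proj a b p)).1

lemma SameProj.traceEq (h : SameProj E u v) : TraceEq E u v := by
  induction u generalizing v with
  | nil =>
    cases v with
    | nil => rfl
    | cons c v => simpa [proj, proj_cons] using h c c (not_indep_self c)
  | cons a u ih =>
    obtain ⟨p, q, rfl, hp⟩ := h.exists_eq_append_cons
    have hmove := traceEq_move_front hp q
    exact ((ih (h.trans hmove.sameProj).of_cons).cons a).trans hmove.symm

end Projections

section TraceRoots

lemma eq_of_flatten_replicate_eq {α : Type*} {m : ℕ} (hm : m ≠ 0) {X Y : List α}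
    (h : (replicate m X).flatten = (replicate m Y).flatten) : X = Y := by
  have hlen : X.length = Y.length := by
    simpa [length_flatten, hm] using congrArg length h
  obtain ⟨k, rfl⟩ := Nat.exists_eq_succ_of_ne_zero hm
  rw [replicate_succ, replicate_succ, flatten_cons, flatten_cons] at h
  exact (append_inj h hlen).1

lemma TraceEq.of_flatten_replicate {m : ℕ} (hm : m ≠ 0) {c d : List (V × Bool)}
    (h : TraceEq E (replicate m c).flatten (replicate m d).flatten) : TraceEq E c d := by
  classical
  refine SameProj.traceEq fun a b hab => eq_of_flatten_replicate_eq hm ?_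
  simpa [proj_flatten_replicate] using h.proj_eq hab

end TraceRoots

section FirstAndLast

variable {u v w : List (V × Bool)}

lemma TraceEq.of_cons {a : V × Bool} (h : TraceEq E (a :: u) (a :: v)) : TraceEq E u v := by
  classical
  exact h.sameProj.of_cons.traceEq

lemma TraceEq.exists_eq_append_cons {a : V × Bool} (h : TraceEq E w (a :: u)) :
    ∃ p q, w = p ++ a :: q ∧ (∀ b ∈ p, Indep E b a) ∧ TraceEq E (p ++ q) u := by
  classical
  obtain ⟨p, q, rfl, hp⟩ := h.symm.sameProj.exists_eq_append_cons
  exact ⟨p, q, rfl, hp, ((traceEq_move_front hp q).symm.trans h).of_cons⟩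

variable (E) in
def IsFirst (x : V × Bool) (w : List (V × Bool)) : Prop := ∃ w', TraceEq E w (x :: w')

variable (E) in
def IsLast (x : V × Bool) (w : List (V × Bool)) : Prop := ∃ w', TraceEq E w (w' ++ [x])

lemma isFirst_iff {x : V × Bool} :
    IsFirst E x w ↔ ∃ p q, w = p ++ x :: q ∧ ∀ b ∈ p, Indep E b x := by
  constructor
  · rintro ⟨w', h⟩
    obtain ⟨p, q, hw, hp, -⟩ := h.exists_eq_append_cons
    exact ⟨p, q, hw, hp⟩
  · rintro ⟨p, q, rfl, hp⟩
    exact ⟨p ++ q, traceEq_move_front hp q⟩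

lemma IsFirst.of_traceEq {x : V × Bool} (hx : IsFirst E x v) (h : TraceEq E u v) :
    IsFirst E x u :=
  let ⟨w', hw'⟩ := hx; ⟨w', h.trans hw'⟩

lemma IsFirst.mem {x : V × Bool} (hx : IsFirst E x w) : x ∈ w :=
  let ⟨_, hw'⟩ := hx; hw'.mem_iff.2 mem_cons_self

lemma isLast_iff_isFirst_reverse {x : V × Bool} : IsLast E x w ↔ IsFirst E x w.reverse :=
  ⟨fun ⟨w', h⟩ => ⟨w'.reverse, by simpa using h.reverse⟩,
    fun ⟨w', h⟩ => ⟨w'.reverse, by simpa using h.reverse⟩⟩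

lemma isFirst_append_iff {x : V × Bool} :
    IsFirst E x (u ++ v) ↔ IsFirst E x u ∨ (∀ b ∈ u, Indep E b x) ∧ IsFirst E x v := by
  constructor
  · intro h
    obtain ⟨p, q, huv, hp⟩ := isFirst_iff.1 h
    rcases append_eq_append_iff.1 huv with ⟨p', rfl, rfl⟩ | ⟨u', rfl, hq⟩
    · exact Or.inr ⟨fun b hb => hp b (mem_append_left _ hb), isFirst_iff.2
        ⟨p', q, rfl, fun b hb => hp b (mem_append_right _ hb)⟩⟩
    · cases u' with
      | nil =>
        simp only [nil_append, append_nil] at hq hp ⊢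
        subst hq
        exact Or.inr ⟨hp, isFirst_iff.2 ⟨[], q, rfl, by simp⟩⟩
      | cons y u' =>
        obtain ⟨rfl, rfl⟩ := cons_eq_cons.1 hq
        exact Or.inl (isFirst_iff.2 ⟨p, u', rfl, hp⟩)
  · rintro (⟨u', hu⟩ | ⟨hu, v', hv⟩)
    · exact ⟨u' ++ v, hu.append_right v⟩
    · exact ⟨u ++ v', (hv.append_left u).trans (traceEq_move_front hu v')⟩

lemma isLast_append_iff {x : V × Bool} :
    IsLast E x (u ++ v) ↔ IsLast E x v ∨ (∀ b ∈ v, Indep E b x) ∧ IsLast E x u := by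
  simp only [isLast_iff_isFirst_reverse, reverse_append, isFirst_append_iff, mem_reverse]

lemma isFirst_singleton_iff {x a : V × Bool} : IsFirst E x [a] ↔ x = a :=
  ⟨fun h => mem_singleton.1 h.mem, fun h => ⟨[], h ▸ TraceEq.refl _⟩⟩

lemma isFirst_cons_iff {x a : V × Bool} :
    IsFirst E x (a :: u) ↔ x = a ∨ Indep E a x ∧ IsFirst E x u := by
  rw [← singleton_append, isFirst_append_iff, isFirst_singleton_iff]
  simp

lemma TraceEq.exists_of_cons_of_ne {a b : V × Bool} (h : TraceEq E (a :: u) (b :: v))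
    (hab : a ≠ b) : Indep E a b ∧ ∃ z, TraceEq E u (b :: z) ∧ TraceEq E v (a :: z) := by
  obtain hba | ⟨hind, z, hz⟩ := isFirst_cons_iff.1 ⟨v, h⟩
  · exact absurd hba.symm hab
  refine ⟨hind, z, hz, (TraceEq.of_cons (a := b) ?_).symm⟩
  exact ((TraceEq.swap hind z).symm.trans (hz.cons a).symm).trans h

lemma exists_traceEq_cons_append_singleton {a b : V × Bool} (ha : IsFirst E a w)
    (hb : IsLast E b w) (hab : a ≠ b) : ∃ z, TraceEq E w (a :: (z ++ [b])) := by
  obtain ⟨w', hw'⟩ := hb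
  obtain ⟨z, hz⟩ | ⟨-, hba⟩ := isFirst_append_iff.1 (ha.of_traceEq hw'.symm)
  · exact ⟨z, hw'.trans (hz.append_right [b])⟩
  · exact absurd (isFirst_singleton_iff.1 hba) hab

end FirstAndLast

section Reduced

variable {u v w : List (V × Bool)}

variable (E) in
def Reducible (w : List (V × Bool)) : Prop :=
  ∃ x u v, TraceEq E w (u ++ x :: invLetter x :: v)

variable (E) in
def IsReduced (w : List (V × Bool)) : Prop := ¬ Reducible E w

lemma Reducible.of_traceEq (h : Reducible E v) (huv : TraceEq E u v) : Reducible E u :=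
  let ⟨x, u', v', h'⟩ := h; ⟨x, u', v', huv.trans h'⟩

lemma IsReduced.of_traceEq (h : IsReduced E u) (huv : TraceEq E u v) : IsReduced E v :=
  fun hv => h (hv.of_traceEq huv)

lemma Reducible.append_right (h : Reducible E u) (v : List (V × Bool)) :
    Reducible E (u ++ v) :=
  let ⟨x, u', v', h'⟩ := h; ⟨x, u', v' ++ v, by simpa using h'.append_right v⟩

lemma Reducible.append_left (u : List (V × Bool)) (h : Reducible E v) :
    Reducible E (u ++ v) :=
  let ⟨x, u', v', h'⟩ := h; ⟨x, u ++ u', v', by simpa using h'.append_left u⟩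

lemma Reducible.two_le_length (h : Reducible E w) : 2 ≤ w.length := by
  obtain ⟨x, u, v, h⟩ := h
  simp only [h.length_eq, length_append, length_cons]
  omega

lemma isReduced_nil : IsReduced E ([] : List (V × Bool)) :=
  fun h => by simpa using h.two_le_length

lemma reducible_append_cons {P r : List (V × Bool)} {x : V × Bool}
    (h : IsFirst E (invLetter x) r) : Reducible E (P ++ x :: r) :=
  let ⟨r', hr'⟩ := h; ⟨x, P, r', (hr'.cons x).append_left P⟩

lemma Reducible.exists_eq_append_cons (h : Reducible E w) :
    ∃ P x r, w = P ++ x :: r ∧ IsFirst E (invLetter x) r := by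
  obtain ⟨x, u, v, h⟩ := h
  induction u generalizing w with
  | nil =>
    obtain ⟨p, q, rfl, hp, hpq⟩ := h.exists_eq_append_cons
    rcases isFirst_append_iff.1 ⟨v, hpq⟩ with hpx | ⟨-, hq⟩
    · exact absurd (indep_invLetter_left.1 (hp _ hpx.mem)) (not_indep_self x)
    · exact ⟨p, x, q, rfl, hq⟩
  | cons b u ih =>
    -- a pair in `p ++ q` survives putting back `b`, which commutes past `p`
    obtain ⟨p, q, rfl, hp, hpq⟩ := TraceEq.exists_eq_append_cons (a := b) (by simpa using h)
    obtain ⟨P, y, r, hPr, hy⟩ := ih hpq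
    rcases append_eq_append_iff.1 hPr with ⟨a', rfl, rfl⟩ | ⟨c', rfl, hr⟩
    · exact ⟨p ++ b :: a', y, r, by simp, hy⟩
    cases c' with
    | nil =>
      subst hr
      exact ⟨P ++ [b], y, r, by simp, hy⟩
    | cons y' c' =>
      obtain ⟨rfl, rfl⟩ := cons_eq_cons.1 hr
      refine ⟨P, y, c' ++ b :: q, by simp, ?_⟩
      have hyb : Indep E b (invLetter y) := indep_invLetter_right.2 (hp y (by simp)).symm
      exact (isFirst_cons_iff.2 (Or.inr ⟨hyb, hy⟩)).of_traceEq
        (traceEq_move_front (fun c hc => hp c (by simp [hc])) q)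

lemma isReduced_append_iff : IsReduced E (u ++ v) ↔
    IsReduced E u ∧ IsReduced E v ∧ ∀ x, IsLast E x u → ¬ IsFirst E (invLetter x) v := by
  constructor
  · intro h
    refine ⟨fun hu => h (hu.append_right v), fun hv => h (hv.append_left u), ?_⟩
    rintro x ⟨u', hu'⟩ ⟨v', hv'⟩
    exact h ⟨x, u', v', by simpa using hu'.append hv'⟩
  · rintro ⟨hu, hv, hboundary⟩ huv
    obtain ⟨P, x, r, hPr, hx⟩ := huv.exists_eq_append_cons
    rcases append_eq_append_iff.1 hPr with ⟨a', rfl, rfl⟩ | ⟨c', rfl, hr⟩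
    · exact hv (reducible_append_cons hx)
    cases c' with
    | nil =>
      subst hr
      exact hv (by simpa using reducible_append_cons (P := []) hx)
    | cons y c' =>
      obtain ⟨rfl, rfl⟩ := cons_eq_cons.1 hr
      rcases isFirst_append_iff.1 hx with hc' | ⟨hind, hv'⟩
      · exact hu (reducible_append_cons hc')
      · refine hboundary x ⟨P ++ c', traceEq_move_back (fun b hb => ?_) P⟩ hv'
        exact indep_invLetter_right.1 (hind b hb)

lemma isReduced_cons_iff {a : V × Bool} :
    IsReduced E (a :: w) ↔ IsReduced E w ∧ ¬ IsFirst E (invLetter a) w := by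
  have hsingle : IsReduced E [a] := fun h => by simpa using h.two_le_length
  have hlast : ∀ x, IsLast E x [a] ↔ x = a := fun x => by
    simp [isLast_iff_isFirst_reverse, isFirst_singleton_iff]
  rw [← singleton_append, isReduced_append_iff]
  simp [hsingle, hlast]

end Reduced

section CyclicallyReduced

variable {u v w c : List (V × Bool)}

variable (E) in
def IsCyclicallyReduced (c : List (V × Bool)) : Prop :=
  IsReduced E c ∧ ∀ x, IsLast E x c → ¬ IsFirst E (invLetter x) c

lemma not_isFirst_nil (x : V × Bool) : ¬ IsFirst E x [] := fun h => by simpa using h.mem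

lemma isFirst_flatten_replicate_iff {m : ℕ} (hm : m ≠ 0) {x : V × Bool} :
    IsFirst E x (replicate m c).flatten ↔ IsFirst E x c := by
  obtain ⟨k, rfl⟩ := Nat.exists_eq_succ_of_ne_zero hm
  rw [replicate_succ, flatten_cons, isFirst_append_iff]
  refine ⟨fun h => h.elim id fun ⟨hc, h⟩ => ?_, Or.inl⟩
  obtain ⟨l, hl, hxl⟩ := mem_flatten.1 h.mem
  rw [eq_of_mem_replicate hl] at hxl
  exact absurd (hc x hxl) (not_indep_self x)

lemma isLast_flatten_replicate_iff {m : ℕ} (hm : m ≠ 0) {x : V × Bool} :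
    IsLast E x (replicate m c).flatten ↔ IsLast E x c := by
  simpa [isLast_iff_isFirst_reverse, reverse_flatten, map_replicate]
    using isFirst_flatten_replicate_iff (E := E) (c := c.reverse) hm

lemma IsCyclicallyReduced.flatten_replicate (hc : IsCyclicallyReduced E c) (m : ℕ) :
    IsCyclicallyReduced E (replicate m c).flatten := by
  induction m with
  | zero => exact ⟨isReduced_nil, fun x _ => not_isFirst_nil _⟩
  | succ k ih =>
    refine ⟨?_, fun x hx hx' => hc.2 x ((isLast_flatten_replicate_iff k.succ_ne_zero).1 hx)
      ((isFirst_flatten_replicate_iff k.succ_ne_zero).1 hx')⟩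
    rw [replicate_succ, flatten_cons, isReduced_append_iff]
    refine ⟨hc.1, ih.1, fun x hx hx' => ?_⟩
    rcases k with _ | k
    · exact not_isFirst_nil _ hx'
    · exact hc.2 x hx ((isFirst_flatten_replicate_iff k.succ_ne_zero).1 hx')

lemma IsReduced.append_flatten_replicate_append (hc : IsCyclicallyReduced E c)
    (h : IsReduced E (u ++ c ++ v)) {m : ℕ} (hm : m ≠ 0) :
    IsReduced E (u ++ (replicate m c).flatten ++ v) := by
  have hlast : ∀ x, IsLast E x (u ++ (replicate m c).flatten) ↔ IsLast E x (u ++ c) := by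
    simp [isLast_append_iff, isLast_flatten_replicate_iff hm, mem_flatten, mem_replicate, hm]
  obtain ⟨huc, hv, hucv⟩ := isReduced_append_iff.1 h
  obtain ⟨hu, -, huc'⟩ := isReduced_append_iff.1 huc
  refine isReduced_append_iff.2 ⟨isReduced_append_iff.2 ⟨hu, (hc.flatten_replicate m).1,
    fun x hx => ?_⟩, hv, fun x hx => hucv x ((hlast x).1 hx)⟩
  rw [isFirst_flatten_replicate_iff hm]
  exact huc' x hx

lemma IsReduced.exists_traceEq_conj (h : IsReduced E w) :
    ∃ g c, IsCyclicallyReduced E c ∧ TraceEq E w (g ++ c ++ FreeGroup.invRev g) := by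
  induction hn : w.length using Nat.strong_induction_on generalizing w with
  | _ n ih =>
  by_cases hc : IsCyclicallyReduced E w
  · exact ⟨[], w, hc, by simpa [FreeGroup.invRev] using TraceEq.refl w⟩
  obtain ⟨x, hx, hx'⟩ : ∃ x, IsLast E x w ∧ IsFirst E (invLetter x) w := by
    by_contra hne
    exact hc ⟨h, fun x hx hx' => hne ⟨x, hx, hx'⟩⟩
  obtain ⟨z, hz⟩ := exists_traceEq_cons_append_singleton hx' hx (invLetter_ne x)
  have hz_red : IsReduced E z :=
    (isReduced_append_iff.1 (isReduced_cons_iff.1 (h.of_traceEq hz)).1).1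
  obtain ⟨g, c, hc, hzc⟩ := ih z.length (by simp [← hn, hz.length_eq]) hz_red rfl
  refine ⟨invLetter x :: g, c, hc, hz.trans ?_⟩
  simpa [FreeGroup.invRev, invLetter] using (hzc.append_right [x]).cons (invLetter x)

end CyclicallyReduced

section Action

variable (E) in
def traceSetoid : Setoid (List (V × Bool)) :=
  ⟨TraceEq E, ⟨TraceEq.refl, TraceEq.symm, TraceEq.trans⟩⟩

variable (E) in
def Trace : Type _ := Quotient (traceSetoid E)

namespace Trace

variable {a b x : V × Bool} {s t : Trace E} {w : List (V × Bool)}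

variable (E) in
def of (w : List (V × Bool)) : Trace E := Quotient.mk _ w

lemma of_eq_of {u v : List (V × Bool)} : of E u = of E v ↔ TraceEq E u v := Quotient.eq

@[elab_as_elim]
lemma ind {p : Trace E → Prop} (h : ∀ w, p (of E w)) (t : Trace E) : p t := Quotient.ind h t

def cons (a : V × Bool) : Trace E → Trace E :=
  Quotient.map (a :: ·) fun _ _ h => TraceEq.cons a h

@[simp] lemma cons_of : cons a (of E w) = of E (a :: w) := rfl

lemma cons_injective (a : V × Bool) : Function.Injective (cons (E := E) a) := by
  intro s t h
  induction s using ind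
  induction t using ind
  exact of_eq_of.2 (of_eq_of.1 h).of_cons

lemma cons_comm (h : Indep E a b) (t : Trace E) : cons a (cons b t) = cons b (cons a t) := by
  induction t using ind
  exact of_eq_of.2 (TraceEq.swap h _)

lemma exists_of_cons_eq_cons (h : cons a s = cons b t) (hab : a ≠ b) :
    Indep E a b ∧ ∃ z, s = cons b z ∧ t = cons a z := by
  induction s using ind
  induction t using ind
  obtain ⟨hind, z, hz, hz'⟩ := (of_eq_of.1 h).exists_of_cons_of_ne hab
  exact ⟨hind, of E z, of_eq_of.2 hz, of_eq_of.2 hz'⟩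

lemma not_exists_cons_eq_cons (ht : ¬ ∃ s, t = cons x s) (hax : a ≠ x) :
    ¬ ∃ s, cons a t = cons x s := fun ⟨_, hs⟩ =>
  ht (((exists_of_cons_eq_cons hs hax).2).imp fun _ hz => hz.1)

lemma exists_eq_cons_iff : (∃ s, of E w = cons x s) ↔ IsFirst E x w := by
  constructor
  · rintro ⟨s, hs⟩
    induction s using ind
    exact ⟨_, of_eq_of.1 hs⟩
  · rintro ⟨w', h⟩
    exact ⟨of E w', of_eq_of.2 h⟩

def IsReduced : Trace E → Prop :=
  Quotient.lift (RAAG.IsReduced E) fun _ _ h =>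
    propext ⟨fun hu => hu.of_traceEq h, fun hv => hv.of_traceEq (TraceEq.symm h)⟩

lemma isReduced_of : (of E w).IsReduced ↔ RAAG.IsReduced E w := Iff.rfl

lemma isReduced_cons_iff :
    (cons a t).IsReduced ↔ t.IsReduced ∧ ¬ ∃ s, t = cons (invLetter a) s := by
  induction t using ind
  rw [cons_of, isReduced_of, isReduced_of, exists_eq_cons_iff, RAAG.isReduced_cons_iff]

open Classical in
noncomputable def act (a : V × Bool) (t : Trace E) : Trace E :=
  if h : ∃ s, t = cons (invLetter a) s then h.choose else cons a t

lemma act_cons_invLetter (a : V × Bool) (s : Trace E) : act a (cons (invLetter a) s) = s := by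
  have h : ∃ s', cons (invLetter a) s = cons (invLetter a) s' := ⟨s, rfl⟩
  rw [act, dif_pos h]
  exact cons_injective _ h.choose_spec.symm

lemma act_invLetter_cons (a : V × Bool) (s : Trace E) : act (invLetter a) (cons a s) = s := by
  simpa using act_cons_invLetter (invLetter a) s

lemma act_of_not_exists (h : ¬ ∃ s, t = cons (invLetter a) s) : act a t = cons a t :=
  dif_neg h

lemma IsReduced.act (ht : t.IsReduced) (a : V × Bool) : (act a t).IsReduced := by
  by_cases h : ∃ s, t = cons (invLetter a) s
  · obtain ⟨s, rfl⟩ := h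
    rw [act_cons_invLetter]
    exact (isReduced_cons_iff.1 ht).1
  · rw [act_of_not_exists h]
    exact isReduced_cons_iff.2 ⟨ht, h⟩

lemma act_act_invLetter (ht : t.IsReduced) (a : V × Bool) : act a (act (invLetter a) t) = t := by
  by_cases h : ∃ s, t = cons a s
  · obtain ⟨s, rfl⟩ := h
    rw [act_invLetter_cons, act_of_not_exists (isReduced_cons_iff.1 ht).2]
  · rw [act_of_not_exists (a := invLetter a) (by simpa using h), act_cons_invLetter]

lemma act_comm_of_exists_of_not_exists (h : Indep E a b) (hb : ∃ s, t = cons (invLetter b) s)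
    (ha : ¬ ∃ s, t = cons (invLetter a) s) : act a (act b t) = act b (act a t) := by
  obtain ⟨s, rfl⟩ := hb
  have hs : ¬ ∃ s', s = cons (invLetter a) s' := by
    rintro ⟨s', rfl⟩
    exact ha ⟨cons (invLetter b) s', cons_comm (by simpa using h.symm) s'⟩
  rw [act_cons_invLetter, act_of_not_exists hs, act_of_not_exists ha,
    cons_comm (by simpa using h) s, act_cons_invLetter]

lemma act_comm (h : Indep E a b) (t : Trace E) : act a (act b t) = act b (act a t) := by
  by_cases hb : ∃ s, t = cons (invLetter b) s <;> by_cases ha : ∃ s, t = cons (invLetter a) s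
  · obtain ⟨s, rfl⟩ := hb
    obtain ⟨s', hs'⟩ := ha
    obtain ⟨-, z, rfl, rfl⟩ := exists_of_cons_eq_cons hs' fun hba => h.1 (by
      simpa [invLetter] using (congrArg Prod.fst hba).symm)
    rw [act_cons_invLetter, act_cons_invLetter, hs', act_cons_invLetter, act_cons_invLetter]
  · exact act_comm_of_exists_of_not_exists h hb ha
  · exact (act_comm_of_exists_of_not_exists h.symm ha hb).symm
  · have hab : ∀ {c d : V × Bool}, Indep E c d → c ≠ invLetter d := fun hcd hc =>
      hcd.1 (by simp [hc, invLetter])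
    rw [act_of_not_exists hb, act_of_not_exists ha,
      act_of_not_exists (not_exists_cons_eq_cons ha (hab h.symm)),
      act_of_not_exists (not_exists_cons_eq_cons hb (hab h)), cons_comm h]

end Trace

end Action

section Group

variable {u v : List (V × Bool)}

variable (E) in
def mk (w : List (V × Bool)) : PresentedGroup (raagRels E) :=
  PresentedGroup.mk _ (FreeGroup.mk w)

lemma mk_append (u v : List (V × Bool)) : mk E (u ++ v) = mk E u * mk E v := by
  simp [mk, ← FreeGroup.mul_mk]

lemma mk_cons (a : V × Bool) (w : List (V × Bool)) : mk E (a :: w) = mk E [a] * mk E w := by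
  rw [← mk_append, singleton_append]

lemma mk_invRev (w : List (V × Bool)) : mk E (FreeGroup.invRev w) = (mk E w)⁻¹ := by
  simp [mk, ← FreeGroup.inv_mk]

lemma mk_invLetter (a : V × Bool) : mk E [invLetter a] = (mk E [a])⁻¹ :=
  mk_invRev [a]

lemma mk_flatten_replicate (m : ℕ) (c : List (V × Bool)) :
    mk E (replicate m c).flatten = mk E c ^ m := by
  induction m with
  | zero => rfl
  | succ m ih => rw [replicate_succ, flatten_cons, mk_append, ih, pow_succ']

lemma mk_singleton_true (s : V) : mk E [(s, true)] = PresentedGroup.of s := rfl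

lemma mk_singleton_false (s : V) : mk E [(s, false)] = (PresentedGroup.of s)⁻¹ :=
  mk_invLetter (s, true)

lemma commute_of_of {s t : V} (hst : s ≠ t) (hE : E s t) :
    Commute (PresentedGroup.of (rels := raagRels E) s) (PresentedGroup.of t) := by
  rw [← commutatorElement_eq_one_iff_commute, commutatorElement_def]
  simpa [PresentedGroup.of] using
    PresentedGroup.one_of_mem (rels := raagRels E) ⟨s, t, hst, hE, rfl⟩

lemma commute_mk_of_indep {a b : V × Bool} (h : Indep E a b) :
    Commute (mk E [a]) (mk E [b]) := by
  have hv : Commute (PresentedGroup.of (rels := raagRels E) a.1) (PresentedGroup.of b.1) :=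
    h.2.elim (commute_of_of h.1) fun hE => (commute_of_of h.1.symm hE).symm
  obtain ⟨s, _ | _⟩ := a <;> obtain ⟨t, _ | _⟩ := b <;>
    simp only [mk_singleton_true, mk_singleton_false] at hv ⊢
  exacts [hv.inv_inv, hv.inv_left, hv.inv_right, hv]

lemma TraceEq.mk_eq (h : TraceEq E u v) : mk E u = mk E v := by
  refine h.eq_of_swap_invariant fun A c d B hcd => ?_
  rw [mk_append, mk_append, mk_cons c (d :: B), mk_cons d B, mk_cons d (c :: B), mk_cons c B,
    (commute_mk_of_indep hcd).left_comm]

lemma exists_isReduced_mk_eq (g : PresentedGroup (raagRels E)) :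
    ∃ w, IsReduced E w ∧ mk E w = g := by
  classical
  obtain ⟨x, rfl⟩ := PresentedGroup.mk_surjective _ g
  rw [← FreeGroup.mk_toWord (x := x)]
  generalize x.toWord = w
  induction hn : w.length using Nat.strong_induction_on generalizing w with
  | _ n ih =>
  by_cases hw : IsReduced E w
  · exact ⟨w, hw, rfl⟩
  obtain ⟨x, u, v, h⟩ := not_not.1 hw
  obtain ⟨w', hw', he⟩ := ih (u ++ v).length (by simp [← hn, h.length_eq]) (u ++ v) rfl
  refine ⟨w', hw', he.trans ?_⟩
  change mk E (u ++ v) = mk E w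
  rw [h.mk_eq, mk_append, mk_append, mk_cons x, mk_cons (invLetter x), mk_invLetter,
    mul_inv_cancel_left]

end Group

section NormalForm

variable {u v w : List (V × Bool)}

variable (E) in
abbrev ReducedTrace : Type _ := {t : Trace E // t.IsReduced}

noncomputable def actPerm (a : V × Bool) : Equiv.Perm (ReducedTrace E) where
  toFun t := ⟨Trace.act a t.1, t.2.act a⟩
  invFun t := ⟨Trace.act (invLetter a) t.1, t.2.act _⟩
  left_inv t := Subtype.ext (by simpa using Trace.act_act_invLetter t.2 (invLetter a))
  right_inv t := Subtype.ext (Trace.act_act_invLetter t.2 a)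

variable (E) in
noncomputable def toPerm : PresentedGroup (raagRels E) →* Equiv.Perm (ReducedTrace E) :=
  PresentedGroup.toGroup (f := fun s => actPerm (s, true)) <| by
    rintro _ ⟨s, t, hst, hE, rfl⟩
    have hc : Commute (actPerm (E := E) (s, true)) (actPerm (t, true)) :=
      Equiv.ext fun r => Subtype.ext (Trace.act_comm ⟨hst, Or.inl hE⟩ r.1)
    simpa [commutatorElement_def] using commutatorElement_eq_one_iff_commute.2 hc

lemma toPerm_mk_singleton (a : V × Bool) : toPerm E (mk E [a]) = actPerm a := by
  obtain ⟨s, _ | _⟩ := a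
  · rw [mk_singleton_false, map_inv, toPerm, PresentedGroup.toGroup.of]
    exact Equiv.ext fun _ => rfl
  · rw [mk_singleton_true, toPerm, PresentedGroup.toGroup.of]

lemma toPerm_mk_apply_nil (hw : IsReduced E w) :
    (toPerm E (mk E w) ⟨Trace.of E [], isReduced_nil⟩).1 = Trace.of E w := by
  induction w with
  | nil => rfl
  | cons a w ih =>
    obtain ⟨hw', ha⟩ := isReduced_cons_iff.1 hw
    rw [mk_cons, map_mul, Equiv.Perm.mul_apply, toPerm_mk_singleton]
    change Trace.act a _ = _
    rw [ih hw', Trace.act_of_not_exists (Trace.exists_eq_cons_iff.not.2 ha)]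
    rfl

theorem TraceEq.of_mk_eq (hu : IsReduced E u) (hv : IsReduced E v) (h : mk E u = mk E v) :
    TraceEq E u v :=
  Trace.of_eq_of.1 <| by rw [← toPerm_mk_apply_nil hu, ← toPerm_mk_apply_nil hv, h]

end NormalForm

section Roots

lemma eq_mk_of_pow_eq_mk_pow {c : List (V × Bool)} (hc : IsCyclicallyReduced E c) {m : ℕ}
    (hm : m ≠ 0) {y : PresentedGroup (raagRels E)} (h : y ^ m = mk E c ^ m) : y = mk E c := by
  obtain ⟨u, hu, rfl⟩ := exists_isReduced_mk_eq y
  obtain ⟨g, d, hd, hud⟩ := hu.exists_traceEq_conj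
  have hmk : mk E u = mk E g * mk E d * (mk E g)⁻¹ := by
    rw [hud.mk_eq, mk_append, mk_append, mk_invRev]
  have htr : TraceEq E (replicate m c).flatten
      (g ++ (replicate m d).flatten ++ FreeGroup.invRev g) := by
    refine TraceEq.of_mk_eq (hc.flatten_replicate m).1
      ((hu.of_traceEq hud).append_flatten_replicate_append hd hm) ?_
    rw [mk_flatten_replicate, ← h, hmk, conj_pow, mk_append, mk_append, mk_invRev,
      mk_flatten_replicate]
  obtain rfl : g = [] := by
    rcases g with _ | ⟨b, g⟩
    · rfl
    -- otherwise `b` and its inverse would be a first and a last letter of `c ^ m`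
    have hfirst : IsFirst E b (replicate m c).flatten := ⟨_, htr⟩
    have hlast : IsLast E (invLetter b) (replicate m c).flatten :=
      ⟨b :: g ++ (replicate m d).flatten ++ FreeGroup.invRev g,
        by simpa [FreeGroup.invRev, invLetter] using htr⟩
    exact absurd (by simpa using hfirst) ((hc.flatten_replicate m).2 _ hlast)
  have hcd : TraceEq E c d := TraceEq.of_flatten_replicate hm (by simpa using htr)
  simp only [FreeGroup.invRev, map_nil, reverse_nil, nil_append, append_nil] at hud
  rw [hud.mk_eq, hcd.mk_eq]

instance : IsMulTorsionFree (PresentedGroup (raagRels E)) where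
  pow_left_injective m hm x y h := by
    obtain ⟨w, hw, rfl⟩ := exists_isReduced_mk_eq x
    obtain ⟨g, c, hc, hwc⟩ := hw.exists_traceEq_conj
    have hconj : MulAut.conj (mk E g)⁻¹ (mk E w) = mk E c := by
      rw [hwc.mk_eq, mk_append, mk_append, mk_invRev, MulAut.conj_apply]
      group
    apply (MulAut.conj (mk E g)⁻¹).injective
    rw [hconj]
    refine (eq_mk_of_pow_eq_mk_pow hc hm ?_).symm
    rw [← map_pow, ← hconj, ← map_pow]
    exact congrArg _ h.symm

end Roots

end RAAG

/-- Lemma 8.2 and Corollary 8.3: in a right-angled Artin group,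
`xᵐ = yᵐ` with `m ≥ 1` implies `x = y`; consequently `Z_G(wᵐ) = Z_G(w)` for
every `w` and nonzero integer `m`. -/
theorem raag_pow_injective {V : Type*} (E : V → V → Prop) :
    (∀ x y : PresentedGroup (raagRels E), ∀ m : ℕ, 1 ≤ m → x ^ m = y ^ m → x = y) ∧
    (∀ w : PresentedGroup (raagRels E), ∀ m : ℤ, m ≠ 0 →
      Subgroup.centralizer {w ^ m} = Subgroup.centralizer {w}) :=
  ⟨fun _ _ _ hm h => pow_left_injective (by omega) h,
    fun w _ hm => centralizer_zpow_singleton w hm⟩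

end ArtinMedian
end
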